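/- Let n ≥ 2 and 0 < s < 1, and define recursively q̃_0 := 2 and, as long as s q̃_k < n, q̃_{k+1} := n q̃_k/(n − s q̃_k) − b_k where b_k := (1/2) min{ n q̃_k/(n − s q̃_k) − q̃_k , 1/k } (with the convention b_0 := (1/2)(n q̃_0/(n − s q̃_0) − q̃_0)). Then the sequence (q̃_k) is strictly increasing, and there exists a finite index k̄ such that s q̃_{k̄+1} ≥ n; in other words, the recursion cannot produce an infinite sequence with s q̃_k < n for all k. -/

import Mathlib

/-!
While `s q̃_k < n` and `q̃_k ≥ 2`, the gain `n q̃_k/(n − s q̃_k) − q̃_k = s q̃_k²/(n − s q̃_k)` is at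
least `4s/n`, and the correction `b_k` removes at most half of it. Hence every step of the
recursion raises `q̃_k` by at least `2s/n`, so `q̃_k ≥ 2 + 2sk/n` grows without bound and
`s q̃_k < n` must eventually fail.
-/

lemma four_mul_div_le_bootstrap_gain {n s x : ℝ} (hs : 0 < s) (hx : 2 ≤ x)
    (hsx : s * x < n) : 4 * s / n ≤ n * x / (n - s * x) - x := by
  have hD : 0 < n - s * x := by linarith
  have hgain : n * x / (n - s * x) - x = s * x ^ 2 / (n - s * x) := by
    rw [eq_div_iff hD.ne', sub_mul, div_mul_cancel₀ _ hD.ne']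
    ring
  rw [hgain]
  calc 4 * s / n ≤ 4 * s / (n - s * x) := by gcongr; nlinarith
    _ ≤ s * x ^ 2 / (n - s * x) :=
      div_le_div_of_nonneg_right (by nlinarith [mul_le_mul hx hx zero_le_two (by linarith)]) hD.le

def BootstrapRec (n : ℕ) (s : ℝ) (q : ℕ → ℝ) : Prop :=
  ∀ k, s * q k < n →
    q (k+1) = (n : ℝ) * q k / ((n : ℝ) - s * q k) -
      (1/2) * (if k = 0 then ((n : ℝ) * q 0 / ((n : ℝ) - s * q 0) - q 0)
               else min ((n : ℝ) * q k / ((n : ℝ) - s * q k) - q k) (1 / (k : ℝ)))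

namespace BootstrapRec

variable {n : ℕ} {s : ℝ} {q : ℕ → ℝ}

lemma add_le_succ (hrec : BootstrapRec n s q) (hs : 0 < s) {k : ℕ}
    (hk : s * q k < n) (h2 : 2 ≤ q k) : q k + 2 * s / n ≤ q (k + 1) := by
  have hgain := four_mul_div_le_bootstrap_gain hs h2 hk
  have hhalf : 4 * s / (n : ℝ) = 2 * (2 * s / n) := by ring
  rw [hrec k hk]
  rcases eq_or_ne k 0 with rfl | hk0
  · simp only [if_true]
    linarith
  · rw [if_neg hk0]
    linarith [min_le_left ((n : ℝ) * q k / ((n : ℝ) - s * q k) - q k) (1 / (k : ℝ))]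

lemma two_add_mul_le (hrec : BootstrapRec n s q) (hs : 0 < s) (hq0 : q 0 = 2) :
    ∀ k, (∀ j < k, s * q j < n) → 2 + 2 * s / n * k ≤ q k
  | 0, _ => by simp [hq0]
  | k + 1, hrun => by
    have ih := two_add_mul_le hrec hs hq0 k fun j hj => hrun j (hj.trans k.lt_succ_self)
    have hc : 0 ≤ 2 * s / n * k := by positivity
    have := hrec.add_le_succ hs (hrun k k.lt_succ_self) (by linarith)
    push_cast
    linarith

lemma two_le (hrec : BootstrapRec n s q) (hs : 0 < s) (hq0 : q 0 = 2) {k : ℕ}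
    (hrun : ∀ j < k, s * q j < n) : 2 ≤ q k := by
  have hc : 0 ≤ 2 * s / n * k := by positivity
  linarith [hrec.two_add_mul_le hs hq0 k hrun]

lemma exists_not_lt (hrec : BootstrapRec n s q) (hs : 0 < s) (hq0 : q 0 = 2) :
    ∃ k, ¬ s * q k < n := by
  by_contra! hall
  have hnR : (0 : ℝ) < n := lt_of_le_of_lt (by rw [hq0]; positivity) (hall 0)
  obtain ⟨k, hk⟩ := exists_nat_gt ((n : ℝ) ^ 2 / (2 * s ^ 2))
  have hgrow := hrec.two_add_mul_le hs hq0 k fun j _ => hall j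
  have hbig : (n : ℝ) < s * (2 * s / n * k) := by
    rw [div_lt_iff₀ (by positivity)] at hk
    rw [show s * (2 * s / n * k) = 2 * s ^ 2 * k / n by ring, lt_div_iff₀ hnR]
    nlinarith
  nlinarith [hall k]

end BootstrapRec

/-- the integrability bootstrap sequence `q̃₀ = 2`,
`q̃_{k+1} = n q̃_k/(n − s q̃_k) − b_k` (as long as `s q̃_k < n`) is strictly increasing while
the recursion runs, and the recursion exits in finitely many steps: there is `k` with
`s q̃_{k+1} ≥ n`. -/
theorem stmt6 (n : ℕ) (hn : 2 ≤ n) (s : ℝ) (hs0 : 0 < s) (hs1 : s < 1)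
    (q : ℕ → ℝ) (hq0 : q 0 = 2)
    (hrec : ∀ k, s * q k < n →
      q (k+1) = (n : ℝ) * q k / ((n : ℝ) - s * q k) -
        (1/2) * (if k = 0 then ((n : ℝ) * q 0 / ((n : ℝ) - s * q 0) - q 0)
                 else min ((n : ℝ) * q k / ((n : ℝ) - s * q k) - q k) (1 / (k : ℝ)))) :
    (∀ k, (∀ j ≤ k, s * q j < n) → q k < q (k+1)) ∧
    (∃ k, (n : ℝ) ≤ s * q (k+1)) := by
  have hrec : BootstrapRec n s q := hrec
  have hnpos : 0 < n := by omega
  refine ⟨fun k hrun => ?_, ?_⟩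
  · have h2 := hrec.two_le hs0 hq0 fun j hj => hrun j hj.le
    have := hrec.add_le_succ hs0 (hrun k le_rfl) h2
    have : 0 < 2 * s / n := by positivity
    linarith
  · obtain ⟨k, hk⟩ := hrec.exists_not_lt hs0 hq0
    have hstart : s * q 0 < n := by
      rw [hq0]
      have : (2 : ℝ) ≤ n := by exact_mod_cast hn
      linarith
    obtain ⟨k, rfl⟩ := Nat.exists_eq_add_one_of_ne_zero fun h0 : k = 0 => hk (h0 ▸ hstart)
    exact ⟨k, not_lt.mp hk⟩
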